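/- arXiv:math/0408171 — 2 statements merged into one kernel-verified Lean document; each statement's English description precedes it below -/
import Mathlib

section
/- For all positive integers k and l, the identity z_{l+k} = z_k ∘ t_{l,k} ∘ z_l holds as maps on semistandard skew tableaux with entries ≤ l+k; that is, for every skew shape λ/μ and every weight a of length l+k, applying z_l, then t_{l,k}, then z_k to any A ∈ YT(λ/μ, a) gives z_{l+k}(A). -/
/-!
Common setup: a (skew) semistandard Young tableau with entries `≤ m` is encoded by
its Gelfand–Tsetlin pattern `g : ℕ → ℕ → ℕ`, where `g i j = μ_i +` (number of entries
`≤ j` in row `i`); rows `i = 0, 1, 2, …` are counted from the top, entry values are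
`1, …, m`, and columns are `j = 0, …, m` (column `0` is the inner shape `μ`,
column `m` is the outer shape `λ`).  All maps in the paper are realized concretely
via Bender–Knuth transformations, following Propositions 1–3 of the paper.
-/

namespace YoungTableauBijections

/-- Gelfand–Tsetlin-type encoding of a skew semistandard Young tableau. -/
abbrev GT : Type := ℕ → ℕ → ℕ

/-- `p` is a partition: weakly decreasing, finitely many nonzero parts (0-indexed). -/
def IsPartition (p : ℕ → ℕ) : Prop :=
  (∀ i, p (i + 1) ≤ p i) ∧ ∃ N, ∀ i, N ≤ i → p i = 0

/-- The number of (nonzero) rows `ℓ(p)` of a partition. -/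
noncomputable def numRows (p : ℕ → ℕ) : ℕ := sInf {N | ∀ i, N ≤ i → p i = 0}

/-- The size `|p|` of a partition (or of a weight). -/
noncomputable def psize (p : ℕ → ℕ) : ℕ := ∑' i, p i

/-- `mu ⊆ lam` componentwise. -/
def subShape (mu lam : ℕ → ℕ) : Prop := ∀ i, mu i ≤ lam i

/-- `g` encodes a semistandard skew tableau with entries `≤ m` (weakly increasing
rows, strictly increasing columns, finitely many cells); columns beyond `m` are
required to be constant (no junk). -/
def IsSSYT (m : ℕ) (g : GT) : Prop :=
  (∀ i j, j < m → g i j ≤ g i (j + 1)) ∧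
  (∀ i j, j < m → g (i + 1) (j + 1) ≤ g i j) ∧
  (∀ i, g (i + 1) 0 ≤ g i 0) ∧
  (∃ N, ∀ i, N ≤ i → g i m = 0) ∧
  (∀ i j, m ≤ j → g i j = g i m)

/-- The number of entries equal to `j + 1` in row `i`
(the recording matrix, 0-indexed). -/
def rowCount (g : GT) (i j : ℕ) : ℕ := g i (j + 1) - g i j

/-- The weight: `wt g j` is the total number of entries equal to `j + 1`. -/
noncomputable def wt (g : GT) (j : ℕ) : ℕ := ∑' i, rowCount g i j

/-- `g ∈ YT(λ/μ, a)`: semistandard, of shape `λ/μ`, entries `≤ m`, and weight `a`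
(where `a j` is the required number of entries equal to `j + 1`). -/
def MemYT (m : ℕ) (lam mu a : ℕ → ℕ) (g : GT) : Prop :=
  IsSSYT m g ∧ (∀ i, g i 0 = mu i) ∧ (∀ i, g i m = lam i) ∧
  ∀ j, j < m → wt g j = a j

/-- The reversed weight `a* = (a_m, …, a_1)` (0-indexed). -/
def wrev (m : ℕ) (a : ℕ → ℕ) : ℕ → ℕ := fun j => a (m - 1 - j)

/-- The lattice-word (Littlewood–Richardson) condition: every initial segment of the
right-to-left, top-to-bottom reading word has at least as many entries `r` as
entries `r + 1`. -/
def IsLattice (m : ℕ) (g : GT) : Prop :=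
  ∀ j i : ℕ, j + 1 < m →
    (∑ q ∈ Finset.range (i + 1), rowCount g q (j + 1)) ≤
      ∑ q ∈ Finset.range i, rowCount g q j

/-- `g ∈ LR(λ/μ, ν)`. -/
def MemLR (m : ℕ) (lam mu nu : ℕ → ℕ) (g : GT) : Prop :=
  MemYT m lam mu nu g ∧ IsLattice m g

/-- The canonical tableau `Can(λ)`: row `i` is filled with entries `i + 1`. -/
def canGT (lam : ℕ → ℕ) : GT := fun i j => if i < j then lam i else 0

/-- The Bender–Knuth transformation `s_r` (`1 ≤ r ≤ m - 1`), acting on GT patterns: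
it replaces `a_{i,r}` by
`min (a_{i,r+1}) (a_{i-1,r-1}) + max (a_{i,r-1}) (a_{i+1,r+1}) - a_{i,r}`
(with the top-row convention that the `min` term is `a_{i,r+1}` for the first row). -/
def bk (r : ℕ) (g : GT) : GT := fun i j =>
  if j = r then
    (if i = 0 then g i (r + 1) else min (g i (r + 1)) (g (i - 1) (r - 1))) +
      max (g i (r - 1)) (g (i + 1) (r + 1)) - g i r
  else g i j

/-- Apply a word in the Bender–Knuth generators; the rightmost letter acts first. -/
def applyWord : List ℕ → GT → GT
  | [], g => g
  | r :: w, g => bk r (applyWord w g)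

/-- The block `(s_b s_{b-1} ⋯ s_1)`. -/
def descBlock (b : ℕ) : List ℕ := (List.range b).map fun i => b - i

/-- `z_m = (s_1)(s_2 s_1)(s_3 s_2 s_1) ⋯ (s_{m-1} ⋯ s_2 s_1)` as a word. -/
def zWord (m : ℕ) : List ℕ := ((List.range (m - 1)).map fun q => descBlock (q + 1)).flatten

/-- The block `(s_j s_{j+1} ⋯ s_{j+r-1})`. -/
def ascBlock (j r : ℕ) : List ℕ := (List.range r).map fun i => j + i

/-- `t_{r,l} = (s_l s_{l+1} ⋯ s_{l+r-1}) ⋯ (s_2 s_3 ⋯ s_{r+1})(s_1 s_2 ⋯ s_r)`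
as a word (here `m = r + l`). -/
def tWord (r l : ℕ) : List ℕ := ((List.range l).map fun q => ascBlock (l - q) r).flatten

/-- The map `z_m`. -/
def zmapGT (m : ℕ) : GT → GT := applyWord (zWord m)

/-- The map `t_{r,l}`. -/
def tmapGT (r l : ℕ) : GT → GT := applyWord (tWord r l)

/-- Cut all columns beyond column `m` (normalize to entries `≤ m`). -/
def restrictGT (m : ℕ) (g : GT) : GT := fun i j => g i (min j m)

/-- The Schützenberger involution `ξ` on (skew) tableaux with entries `≤ m`,
computed by the Bender–Knuth word `z_m` (Proposition 1 of the paper). -/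
def schutz (m : ℕ) (g : GT) : GT := restrictGT m (zmapGT m g)

/-- `glue r B A` encodes `B ⋆ Ã`: the union of `B` (entries `≤ r`) with `A`
relabelled to have entries `r + 1, r + 2, …`. -/
def glue (r : ℕ) (B A : GT) : GT := fun i j => if j ≤ r then B i j else A i (j - r)

/-- Shift columns left by `s` (relabel entries by subtracting `s`). -/
def shiftCols (s : ℕ) (g : GT) : GT := fun i j => g i (j + s)

/-- Tableau switching `ζ(B, A) = (A′, B′)`, where `B` has entries `≤ r` and `A` has
entries `≤ l`: glue, apply `t_{r,l}`, and split again (Proposition 2 of the paper). -/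
def switch (r l : ℕ) (B A : GT) : GT × GT :=
  (restrictGT l (tmapGT r l (glue r B A)),
    restrictGT r (shiftCols l (tmapGT r l (glue r B A))))

/-- Jeu de taquin rectification `ψ` of a skew tableau with entries `≤ l`:
switch it past the canonical tableau of its inner shape. -/
noncomputable def rect (l : ℕ) (A : GT) : GT :=
  (switch (numRows fun i => A i 0) l (canGT fun i => A i 0) A).1

/-- `V ∈ Mat(a, b)`: a `k × k` nonnegative integer matrix (0-indexed) with row
sums `a` and column sums `b`. -/
def MemMat (k : ℕ) (a b : ℕ → ℕ) (V : ℕ → ℕ → ℕ) : Prop :=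
  (∀ i, i < k → ∑ j ∈ Finset.range k, V i j = a i) ∧
  (∀ j, j < k → ∑ i ∈ Finset.range k, V i j = b j)

/-- The skew tableau `Y ∈ YT(π/σ, b)` of Proposition 3: row `(k+1) - i` (1-indexed)
contains exactly `v_{i,j}` entries equal to `j`. -/
def rskY (k : ℕ) (V : ℕ → ℕ → ℕ) : GT := fun p j =>
  if p < k then
    (∑ q ∈ Finset.range (k - p - 1), ∑ s ∈ Finset.range k, V q s) +
      ∑ q ∈ Finset.range (min j k), V (k - p - 1) q
  else 0

/-- The companion skew tableau `X` of Proposition 3 (built from the transpose). -/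
def rskX (k : ℕ) (V : ℕ → ℕ → ℕ) : GT := rskY k fun i j => V j i

/-- The RSK correspondence `φ(V) = (B, A)` (insertion tableau, recording tableau),
realized via jeu de taquin as in Proposition 3 of the paper. -/
noncomputable def rsk (k : ℕ) (V : ℕ → ℕ → ℕ) : GT × GT :=
  (rect k (rskY k V), rect k (rskX k V))

/-- The rotated complemented tableau `A^•` of a straight-shape tableau `A` with
entries `≤ k` and at most `l` rows: `A^• i j = λ_1 - A (l-1-i) (k-j)`. -/
def rotGT (k l : ℕ) (A : GT) : GT := fun i j =>
  if i < l then A 0 k - A (l - 1 - i) (k - min j k) else 0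

/-- `composeGT q s Ytop Xbot` encodes the composition: `Ytop` occupies the top `q`
rows, shifted `s` columns to the right, sitting above and to the right of `Xbot`. -/
def composeGT (q s : ℕ) (Ytop Xbot : GT) : GT := fun i j =>
  if i < q then s + Ytop i j else Xbot (i - q) j

/-- `B ∈ CF(μ, ν, λ)`: `B ∈ YT(μ, λ - ν)` and `B ∘ Can(ν) ∈ LR(μ ∘ ν, λ)`
(all entries `≤ l`, where `l = ℓ(λ)`). -/
def MemCF (l : ℕ) (mu nu lam : ℕ → ℕ) (B : GT) : Prop :=
  MemYT l mu (fun _ => 0) (fun j => lam j - nu j) B ∧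
  MemLR l (fun i => if i < l then mu 0 + nu i else mu (i - l))
    (fun i => if i < l then mu 0 else 0) lam
    (composeGT l (mu 0) (canGT nu) B)

/-- `B ∈ CF*(μ, ν, λ)`: `B ∈ YT(μ, (λ - ν)*)` and `B^• ∘ Can(ν) ∈ LR(μ^• ∘ ν, λ)`. -/
def MemCFstar (l : ℕ) (mu nu lam : ℕ → ℕ) (B : GT) : Prop :=
  MemYT l mu (fun _ => 0) (wrev l fun j => lam j - nu j) B ∧
  MemLR l
    (fun i => if i < l then mu 0 + nu i
      else if i - l < numRows mu then mu 0 else 0)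
    (fun i => if i < l then mu 0
      else if i - l < numRows mu then mu 0 - mu (numRows mu - 1 - (i - l)) else 0)
    lam
    (composeGT l (mu 0) (canGT nu) (rotGT l (numRows mu) B))

/-- The extended recording matrix of `A` (1-indexed), with the conventions
`c_{0,q} = 0`, `c_{i,0} = μ_i`. -/
def cext (A : GT) (i q : ℕ) : ℕ :=
  if i = 0 then 0 else if q = 0 then A (i - 1) 0 else rowCount A (i - 1) (q - 1)

/-- The recording matrix `D = (d_{i,j})` of `γ(A)` (1-indexed):
`d_{i,j} = Σ_{q=0}^{l-j} c_{l-j+i,q} - Σ_{q=0}^{l-j+1} c_{l-j+1+i,q}`. -/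
def dmat (l : ℕ) (A : GT) (i j : ℕ) : ℕ :=
  (∑ q ∈ Finset.range (l - j + 1), cext A (l - j + i) q) -
    ∑ q ∈ Finset.range (l - j + 2), cext A (l - j + 1 + i) q

/-- The map `γ`, on GT patterns (its output is the straight-shape tableau of shape
`μ` whose recording matrix is `D`). -/
def gammaMap (l : ℕ) (A : GT) : GT := fun i j =>
  ∑ q ∈ Finset.Icc 1 (min j l), dmat l A (i + 1) q

/-- The companion map `τ`: `τ(A)` is the straight-shape tableau whose recording
matrix is `e_{i,j} = c_{j,i}`. -/
def tauMap (l : ℕ) (A : GT) : GT := fun i j =>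
  ∑ q ∈ Finset.range (min j l), rowCount A q i

/-- The reversal map `χ = ζ ∘ ξ ∘ ζ`:
`χ(A) = A″` where `(A′, C′) = ζ(Can(μ), A)` and `(C″, A″) = ζ(ξ^N(A′), C′)`. -/
def chiMap (r l : ℕ) (mu : ℕ → ℕ) (A : GT) : GT :=
  (switch l r (schutz l (switch r l (canGT mu) A).1) ((switch r l (canGT mu) A).2)).2

/-- The octahedral map `ς(A, B) = (B′, D)` defined by three tableau switchings. -/
noncomputable def octa (k1 k2 k3 : ℕ) (lam : ℕ → ℕ) (A B : GT) : GT × GT :=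
  let C1 := (switch k1 k2 (canGT lam) A).2
  let P := switch k1 k3 C1 B
  let pi := fun i => P.1 i k3
  (P.1, (switch (numRows pi) k1 (canGT pi) P.2).2)

/-! Both sides are words in the Bender–Knuth involutions, and `s_i`, `s_j` commute when
`|i - j| ≥ 2`: each rewrites only its own column of the pattern and reads only the two
neighbouring ones. Induct on `l`, using `z_{l+1} = z_l ∘ (s_l ⋯ s_1)` and
`t_{l+1,k} = t_{l,k} ∘ (s_{l+k} ⋯ s_{l+1})`: the block `s_{l+k} ⋯ s_{l+1}` commutes past `z_l`
and joins `s_l ⋯ s_1` into `s_{l+k} ⋯ s_1`, turning `z_{l+k}` into `z_{l+k+1}`. -/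

lemma applyWord_cons (r : ℕ) (w : List ℕ) : applyWord (r :: w) = bk r ∘ applyWord w := rfl

lemma applyWord_append (u v : List ℕ) : applyWord (u ++ v) = applyWord u ∘ applyWord v := by
  induction u with
  | nil => rfl
  | cons r u ih => rw [List.cons_append, applyWord_cons, applyWord_cons, ih]; rfl

lemma commute_bk_bk_of_add_two_le {r s : ℕ} (h : r + 2 ≤ s) :
    Function.Commute (bk r) (bk s) := by
  intro g
  funext i j
  have : r + 1 ≠ s ∧ r - 1 ≠ s ∧ r ≠ s ∧ s - 1 ≠ r ∧ s + 1 ≠ r := by omega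
  by_cases hr : j = r <;> by_cases hs : j = s <;> simp_all [bk]

lemma commute_bk_bk {r s : ℕ} (h : r + 2 ≤ s ∨ s + 2 ≤ r) :
    Function.Commute (bk r) (bk s) :=
  h.elim commute_bk_bk_of_add_two_le fun h => (commute_bk_bk_of_add_two_le h).symm

lemma commute_applyWord {f : GT → GT} {w : List ℕ}
    (h : ∀ r ∈ w, Function.Commute f (bk r)) :
    Function.Commute f (applyWord w) := by
  induction w with
  | nil => exact Function.Commute.id_right
  | cons r w ih =>
    exact (h r List.mem_cons_self).comp_right (ih fun s hs => h s (List.mem_cons_of_mem r hs))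

lemma commute_applyWord_applyWord {u v : List ℕ}
    (h : ∀ r ∈ u, ∀ s ∈ v, r + 2 ≤ s ∨ s + 2 ≤ r) :
    Function.Commute (applyWord u) (applyWord v) :=
  commute_applyWord fun s hs =>
    (commute_applyWord fun r hr => (commute_bk_bk (h r hr s hs)).symm).symm

lemma mem_descBlock {x b : ℕ} (h : x ∈ descBlock b) : 1 ≤ x ∧ x ≤ b := by
  simp only [descBlock, List.mem_map, List.mem_range] at h
  obtain ⟨i, hi, rfl⟩ := h
  omega

lemma lt_of_mem_zWord {x m : ℕ} (h : x ∈ zWord m) : x < m := by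
  simp only [zWord, List.mem_flatten, List.mem_map, List.mem_range] at h
  obtain ⟨_, ⟨q, hq, rfl⟩, hx⟩ := h
  have := mem_descBlock hx
  omega

lemma lt_of_mem_tWord {x r l : ℕ} (h : x ∈ tWord r l) : x < l + r := by
  simp only [tWord, List.mem_flatten, List.mem_map, List.mem_range] at h
  obtain ⟨_, ⟨q, hq, rfl⟩, hx⟩ := h
  obtain ⟨i, hi, rfl⟩ := List.mem_map.1 hx
  rw [List.mem_range] at hi
  omega

lemma descBlock_succ (b : ℕ) : descBlock (b + 1) = (b + 1) :: descBlock b := by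
  simp only [descBlock, List.range_succ_eq_map, List.map_cons, List.map_map, Nat.sub_zero]
  refine congrArg _ (List.map_congr_left fun i _ => ?_)
  simp only [Function.comp_apply]
  omega

lemma descBlock_add (k r : ℕ) :
    (descBlock k).map (· + r) ++ descBlock r = descBlock (k + r) := by
  induction k with
  | zero => simp [descBlock]
  | succ k ih => rw [descBlock_succ, List.map_cons, List.cons_append, ih, Nat.add_right_comm,
      descBlock_succ]

lemma ascBlock_succ (j r : ℕ) : ascBlock j (r + 1) = ascBlock j r ++ [j + r] := by
  simp [ascBlock, List.range_succ]

lemma zWord_succ (m : ℕ) : zWord (m + 1) = zWord m ++ descBlock m := by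
  cases m with
  | zero => rfl
  | succ m => simp [zWord, List.range_succ]

lemma tWord_zero_left (l : ℕ) : tWord 0 l = [] := by
  simp [tWord, ascBlock]

lemma tWord_succ (r l : ℕ) : tWord r (l + 1) = ascBlock (l + 1) r ++ tWord r l := by
  simp only [tWord, List.range_succ_eq_map, List.map_cons, List.map_map, List.flatten_cons,
    Nat.sub_zero]
  refine congrArg _ (congrArg _ (List.map_congr_left fun q _ => ?_))
  simp only [Function.comp_apply]
  congr 1
  omega

lemma zmapGT_succ (m : ℕ) : zmapGT (m + 1) = zmapGT m ∘ applyWord (descBlock m) := by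
  rw [zmapGT, zWord_succ, applyWord_append, zmapGT]

/-- Each block of `t_{r+1,l}` ends with one extra letter, which moves to the right past the
blocks that follow it, all of whose letters are far from it. -/
lemma tmapGT_succ_left (r l : ℕ) :
    tmapGT (r + 1) l = tmapGT r l ∘ applyWord ((descBlock l).map (· + r)) := by
  induction l with
  | zero => rfl
  | succ l ih =>
    have hfar : Function.Commute (bk (l + 1 + r)) (tmapGT r l) :=
      commute_applyWord fun x hx => commute_bk_bk (by have := lt_of_mem_tWord hx; omega)
    funext g
    simp only [tmapGT] at ih hfar ⊢
    rw [tWord_succ, ascBlock_succ, tWord_succ, descBlock_succ, List.map_cons]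
    simp only [applyWord_append, ih, Function.comp_apply, applyWord]
    exact congrArg (applyWord (ascBlock (l + 1) r)) (hfar _)

lemma zmapGT_comp_tmapGT_comp_zmapGT (k r : ℕ) :
    zmapGT k ∘ tmapGT r k ∘ zmapGT r = zmapGT (r + k) := by
  induction r with
  | zero => rw [tmapGT, tWord_zero_left, Nat.zero_add]; rfl
  | succ r ih =>
    have hfar : Function.Commute (applyWord ((descBlock k).map (· + r))) (zmapGT r) :=
      commute_applyWord_applyWord fun x hx y hy => by
        obtain ⟨z, hz, rfl⟩ := List.mem_map.1 hx
        have := mem_descBlock hz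
        have := lt_of_mem_zWord hy
        omega
    calc zmapGT k ∘ tmapGT (r + 1) k ∘ zmapGT (r + 1)
        = (zmapGT k ∘ tmapGT r k ∘ zmapGT r) ∘ applyWord ((descBlock k).map (· + r))
            ∘ applyWord (descBlock r) := by
          rw [tmapGT_succ_left, zmapGT_succ]
          funext g
          exact congrArg (zmapGT k ∘ tmapGT r k) (hfar _)
      _ = zmapGT (r + k + 1) := by
          rw [ih, ← applyWord_append, descBlock_add, Nat.add_comm k r, zmapGT_succ]
      _ = zmapGT (r + 1 + k) := by rw [Nat.add_right_comm]

theorem z_t_z_relation_general (k l : ℕ) (A : GT) :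
    zmapGT k (tmapGT l k (zmapGT l A)) = zmapGT (l + k) A :=
  congrFun (zmapGT_comp_tmapGT_comp_zmapGT k l) A

/-- relation `(⊛)`.
For all positive integers `k` and `l`, `z_{l+k} = z_k ∘ t_{l,k} ∘ z_l` as maps on
semistandard skew tableaux with entries `≤ l + k`: for every skew shape `λ/μ` and
weight `a` of length `l + k`, applying `z_l`, then `t_{l,k}`, then `z_k` to any
`A ∈ YT(λ/μ, a)` gives `z_{l+k}(A)`. -/
theorem z_t_z_relation
    (k l : ℕ) (hk : 1 ≤ k) (hl : 1 ≤ l)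
    (lam mu a : ℕ → ℕ)
    (hlam : IsPartition lam) (hmu : IsPartition mu) (hsub : subShape mu lam)
    (A : GT) (hA : MemYT (l + k) lam mu a A) :
    zmapGT k (tmapGT l k (zmapGT l A)) = zmapGT (l + k) A :=
  z_t_z_relation_general k l A

end YoungTableauBijections
end

section
/- Let μ ⊆ λ and ν ⊢ |λ/μ|. The map γ, defined on recording matrices by d_{i,j} = Σ_{q=0}^{l−j} c_{l−j+i, q} − Σ_{q=0}^{l−j+1} c_{l−j+1+i, q} (with the conventions c_{0,0} = 0, c_{i,0} = μ_i for 1 ≤ i ≤ l = ℓ(λ), and c_{k,j} = 0 for k > l), is a well-defined bijection γ : LR(λ/μ, ν) → CF*(μ, ν, λ). -/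
/-!
Common setup: a (skew) semistandard Young tableau with entries `≤ m` is encoded by
its Gelfand–Tsetlin pattern `g : ℕ → ℕ → ℕ`, where `g i j = μ_i +` (number of entries
`≤ j` in row `i`); rows `i = 0, 1, 2, …` are counted from the top, entry values are
`1, …, m`, and columns are `j = 0, …, m` (column `0` is the inner shape `μ`,
column `m` is the outer shape `λ`).  All maps in the paper are realized concretely
via Bender–Knuth transformations, following Propositions 1–3 of the paper.
-/

namespace YoungTableauBijections

/-! ### Auxiliary machinery for the proof of `gamma_bijection` -/

open Finset

private lemma tsum_eq_range' {f : ℕ → ℕ} {N : ℕ} (h : ∀ i, N ≤ i → f i = 0) :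
    ∑' i, f i = ∑ i ∈ Finset.range N, f i :=
  tsum_eq_sum (fun i hi => h i (by simpa using hi))

private lemma sum_range_congr_zero {f : ℕ → ℕ} {N m n : ℕ}
    (h0 : ∀ r, N ≤ r → f r = 0) (hm : N ≤ m) (hn : N ≤ n) :
    ∑ r ∈ range m, f r = ∑ r ∈ range n, f r := by
  have key : ∀ k, N ≤ k → ∑ r ∈ range k, f r = ∑ r ∈ range N, f r := by
    intro k hk
    refine (Finset.sum_subset (Finset.range_subset_range.2 hk) ?_).symm
    intro x _ hnx
    exact h0 x (by simpa using hnx)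
  rw [key m hm, key n hn]

private lemma sum_sub_of_le {f g : ℕ → ℕ} {n : ℕ} (h : ∀ r, r < n → g r ≤ f r) :
    (∑ r ∈ Finset.range n, (f r - g r)) + ∑ r ∈ Finset.range n, g r
      = ∑ r ∈ Finset.range n, f r := by
  induction n with
  | zero => simp
  | succ n ih =>
    rw [Finset.sum_range_succ, Finset.sum_range_succ, Finset.sum_range_succ]
    have h1 := h n (by omega)
    have h2 := ih (fun r hr => h r (by omega))
    omega

private lemma rev_sum (f : ℕ → ℕ) {M L : ℕ} (h : M ≤ L) :
    ∑ p ∈ Finset.range M, f (L - 1 - p) = ∑ i ∈ Finset.Ico (L - M) L, f i := by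
  rw [Finset.sum_Ico_eq_sum_range, show L - (L - M) = M by omega,
    ← Finset.sum_range_reflect (fun i => f (L - M + i)) M]
  apply Finset.sum_congr rfl
  intro p hp
  have := Finset.mem_range.1 hp
  congr 1
  omega

private lemma sum_Icc_telescope {F : ℕ → ℕ} :
    ∀ {m : ℕ}, (∀ q, 1 ≤ q → q ≤ m → F (q-1) ≤ F q) →
      (∑ q ∈ Finset.Icc 1 m, (F q - F (q-1))) + F 0 = F m := by
  intro m
  induction m with
  | zero => simp
  | succ m ih =>
    intro h
    rw [← Finset.insert_Icc_right_eq_Icc_add_one (by omega), Finset.sum_insert (by simp)]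
    have h2 := ih (fun q h1 h2 => h q h1 (by omega))
    have h3 := h (m+1) (by omega) le_rfl
    simp only [Nat.add_sub_cancel] at h3 ⊢
    omega

private lemma monoLe {l : ℕ} {A : GT} (hm : ∀ r c, c < l → A r c ≤ A r (c+1)) :
    ∀ r c c', c ≤ c' → c' ≤ l → A r c ≤ A r c' := by
  intro r c c' h h'
  obtain ⟨k, rfl⟩ := Nat.exists_eq_add_of_le h
  clear h
  induction k with
  | zero => simp
  | succ k ih =>
    have e : c + (k+1) = (c+k) + 1 := by omega
    rw [e]
    exact le_trans (ih (by omega)) (hm r (c+k) (by omega))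

private lemma partAnti {p : ℕ → ℕ} (hp : ∀ i, p (i+1) ≤ p i) :
    ∀ {i j : ℕ}, i ≤ j → p j ≤ p i := by
  intro i j h
  obtain ⟨k, rfl⟩ := Nat.exists_eq_add_of_le h
  clear h
  induction k with
  | zero => simp
  | succ k ih => exact le_trans (by rw [show i + (k+1) = (i+k)+1 by omega]; exact hp (i+k)) ih

/-- Structural facts about an LR tableau `A` of shape `λ/μ`, in additive form. -/
private structure Good (l L : ℕ) (lam mu nu : ℕ → ℕ) (A : GT) : Prop where
  mono : ∀ r c, c < l → A r c ≤ A r (c+1)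
  col  : ∀ r c, c < l → A (r+1) (c+1) ≤ A r c
  base : ∀ r, A r 0 = mu r
  top  : ∀ r, A r l = lam r
  stab : ∀ r c, l ≤ c → A r c = A r l
  zero : ∀ r c, l ≤ r → A r c = 0
  diag : ∀ r c, r < c → A r c = lam r
  bnd  : ∀ i c, c ≤ l → A (i+c) c ≤ mu i
  colsum : ∀ c, c < l →
    (∑ r ∈ Finset.range (l+L), A r (c+1)) = (∑ r ∈ Finset.range (l+L), A r c) + nu c
  latt : ∀ j i, j+1 < l →
    (∑ r ∈ Finset.range (i+1), A r (j+2)) + (∑ r ∈ Finset.range i, A r j)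
      ≤ (∑ r ∈ Finset.range (i+1), A r (j+1)) + (∑ r ∈ Finset.range i, A r (j+1))

private lemma Good.van {l L : ℕ} {lam mu nu : ℕ → ℕ} {A : GT}
    (hg : Good l L lam mu nu A) (hmuL : ∀ i, L ≤ i → mu i = 0) :
    ∀ r c, c ≤ l → L + c ≤ r → A r c = 0 := by
  intro r c hc hr
  have h1 : A ((r - c) + c) c ≤ mu (r - c) := hg.bnd (r - c) c hc
  rw [show (r - c) + c = r by omega] at h1
  have := hmuL (r - c) (by omega)
  omega

/-- `SA A c n = Σ_{r<n} A r c`, stability of the partial column sums. -/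
private lemma SA_stab' {l L : ℕ} {A : GT}
    (hvan : ∀ r c, c ≤ l → L + c ≤ r → A r c = 0)
    {c n : ℕ} (hc : c ≤ l) (hn : L + c ≤ n) :
    ∑ r ∈ Finset.range n, A r c = ∑ r ∈ Finset.range (l+L), A r c :=
  sum_range_congr_zero (fun r hr => hvan r c hc hr) hn (by omega)

private lemma SA_diag' {lam : ℕ → ℕ} {A : GT}
    (hdiag : ∀ r c, r < c → A r c = lam r) {c n : ℕ} (hn : n ≤ c) :
    ∑ r ∈ Finset.range n, A r c = ∑ r ∈ Finset.range n, lam r :=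
  Finset.sum_congr rfl (fun r hr => hdiag r c (by have := Finset.mem_range.1 hr; omega))

private lemma Good.SA_diag {l L : ℕ} {lam mu nu : ℕ → ℕ} {A : GT}
    (hg : Good l L lam mu nu A) {c n : ℕ} (hn : n ≤ c) :
    ∑ r ∈ Finset.range n, A r c = ∑ r ∈ Finset.range n, lam r :=
  SA_diag' hg.diag hn

/-- Bridge between partial column sums of `A` and partial column sums of `B`. -/
private lemma SBTa' {l L : ℕ} {A B : GT}
    (hvan : ∀ r c, c ≤ l → L + c ≤ r → A r c = 0)
    (hrel : ∀ i j, j ≤ l → B i j = A (i + (l - j)) (l - j)) :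
    ∀ c a, c ≤ l → a ≤ L →
      (∑ r ∈ Finset.range (a+c), A r c) + (∑ i ∈ Finset.Ico a L, B i (l-c))
        = ∑ r ∈ Finset.range (l+L), A r c := by
  intro c a hc ha
  have h1 : ∀ i, i ∈ Finset.Ico a L → B i (l-c) = A (i + c) c := by
    intro i _
    rw [hrel i (l-c) (by omega)]
    congr 1 <;> omega
  rw [Finset.sum_congr rfl h1]
  have h2 : (∑ i ∈ Finset.Ico a L, A (i + c) c) = ∑ x ∈ Finset.range (L - a), A ((a+c) + x) c := by
    rw [Finset.sum_Ico_eq_sum_range]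
    exact Finset.sum_congr rfl (fun x _ => by congr 1; omega)
  rw [h2, ← Finset.sum_range_add (fun r => A r c) (a+c) (L-a),
    show a + c + (L - a) = L + c by omega]
  exact SA_stab' hvan hc (by omega)

private lemma Good.SBTa {l L : ℕ} {lam mu nu : ℕ → ℕ} {A B : GT}
    (hg : Good l L lam mu nu A) (hmuL : ∀ i, L ≤ i → mu i = 0)
    (hrel : ∀ i j, j ≤ l → B i j = A (i + (l - j)) (l - j)) :
    ∀ c a, c ≤ l → a ≤ L →
      (∑ r ∈ Finset.range (a+c), A r c) + (∑ i ∈ Finset.Ico a L, B i (l-c))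
        = ∑ r ∈ Finset.range (l+L), A r c :=
  SBTa' (hg.van hmuL) hrel

/-- Closed form of `gammaMap`: it is the antidiagonal transform. -/
private lemma gamma_closed {l : ℕ} {A : GT}
    (hmono : ∀ r c, c < l → A r c ≤ A r (c+1))
    (hcol : ∀ r c, c < l → A (r+1) (c+1) ≤ A r c)
    (hzero : ∀ i, A (l+i) l = 0) :
    ∀ i j, gammaMap l A i j = A (i + (l - j)) (l - j) := by
  have cext_sum : ∀ r c, c ≤ l → (∑ t ∈ Finset.range (c+1), cext A (r+1) t) = A r c := by
    intro r c
    induction c with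
    | zero => intro _; simp [cext]
    | succ c ih =>
      intro hc
      rw [Finset.sum_range_succ, ih (by omega)]
      have h1 : cext A (r+1) (c+1) = rowCount A r c := by simp [cext]
      rw [h1]
      have := hmono r c (by omega)
      unfold rowCount
      omega
  intro i j
  unfold gammaMap
  set m := min j l with hm
  have hml : m ≤ l := by omega
  have hdm : ∀ q, 1 ≤ q → q ≤ m →
      dmat l A (i+1) q = A (l - q + i) (l - q) - A ((l - q + i) + 1) ((l - q) + 1) := by
    intro q h1 h2
    unfold dmat
    have e1 : l - q + (i+1) = (l - q + i) + 1 := by omega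
    have e2 : l - q + 1 + (i+1) = ((l - q + 1 + i)) + 1 := by omega
    rw [e1, e2]
    rw [show l - q + 1 = (l - q) + 1 by omega] at *
    rw [show (l - q) + 1 + 1 = ((l-q)+1) + 1 by omega]
    rw [cext_sum (l - q + i) (l - q) (by omega)]
    rw [show (l-q) + 1 + i = (l - q + i) + 1 by omega]
    rw [cext_sum ((l - q + i) + 1) ((l-q) + 1) (by omega)]
  set F : ℕ → ℕ := fun q => A (l - q + i) (l - q) with hF
  have hFeq : ∀ q, 1 ≤ q → q ≤ m → dmat l A (i+1) q = F q - F (q-1) := by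
    intro q h1 h2
    rw [hdm q h1 h2]
    have e1 : l - (q-1) + i = (l - q + i) + 1 := by omega
    have e2 : l - (q-1) = (l - q) + 1 := by omega
    simp only [hF, e1, e2]
    rw [show l - q + 1 + i = l - q + i + 1 by omega]
  have hFmono : ∀ q, 1 ≤ q → q ≤ m → F (q-1) ≤ F q := by
    intro q h1 h2
    have := hcol (l - q + i) (l - q) (by omega)
    simp only [hF]
    have e1 : l - (q-1) + i = (l - q + i) + 1 := by omega
    have e2 : l - (q-1) = (l - q) + 1 := by omega
    rw [e1, e2]
    exact this
  rw [Finset.sum_congr rfl (fun q hq => by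
    have := Finset.mem_Icc.1 hq
    exact hFeq q this.1 this.2)]
  have htel := sum_Icc_telescope hFmono
  have hF0 : F 0 = 0 := by
    simp only [hF, Nat.sub_zero]
    exact hzero i
  have hFm : F m = A (i + (l - j)) (l - j) := by
    simp only [hF]
    congr 1 <;> omega
  omega
private lemma good_of_src {l L : ℕ} {lam mu nu : ℕ → ℕ} {A : GT}
    (hsub : subShape mu lam)
    (hl0 : ∀ i, l ≤ i → lam i = 0)
    (hA : MemLR l lam mu nu A) : Good l L lam mu nu A := by
  obtain ⟨⟨⟨m1, m2, _m3, _m4, m5⟩, hbase, htop, hwt⟩, hlat⟩ := hA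
  have zero : ∀ r c, l ≤ r → A r c = 0 := by
    intro r c hr
    have hmu0 : mu r = 0 := by have := hsub r; have := hl0 r hr; omega
    rcases le_or_gt c l with hc | hc
    · have h1 : A r c ≤ A r l := monoLe m1 r c l hc le_rfl
      have h2 := htop r
      have := hl0 r hr
      omega
    · rw [m5 r c (by omega), htop r]
      exact hl0 r hr
  -- rowCount vanishing above the diagonal
  have hZ : ∀ c q, q < c → A q (c+1) = A q c := by
    intro c
    induction c with
    | zero => omega
    | succ c ih =>
      intro q hq
      by_cases hcl : c + 1 < l
      · have hlt := hlat c c hcl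
        have hz : ∑ q' ∈ Finset.range c, rowCount A q' c = 0 :=
          Finset.sum_eq_zero (fun q' hq' => by
            have h1 := ih q' (Finset.mem_range.1 hq')
            unfold rowCount; omega)
        rw [hz] at hlt
        have h2 := Finset.sum_eq_zero_iff.1 (Nat.le_zero.1 hlt) q (Finset.mem_range.2 hq)
        have h3 := m1 q (c+1) hcl
        unfold rowCount at h2
        omega
      · rw [m5 q (c+2) (by omega), m5 q (c+1) (by omega)]
  have diag : ∀ r c, r < c → A r c = lam r := by
    have key : ∀ d c r, l - c ≤ d → r < c → A r c = lam r := by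
      intro d
      induction d with
      | zero =>
        intro c r hc hr
        rw [m5 r c (by omega)]
        exact htop r
      | succ d ih =>
        intro c r hc hr
        rcases le_or_gt l c with h | h
        · rw [m5 r c h]; exact htop r
        · rw [← hZ c r hr]
          exact ih (c+1) r (by omega) (by omega)
    exact fun r c h => key (l - c) c r le_rfl h
  have bnd : ∀ i c, c ≤ l → A (i+c) c ≤ mu i := by
    intro i c
    induction c with
    | zero => intro _; rw [Nat.add_zero, hbase]
    | succ c ih =>
      intro hc
      have h1 := m2 (i+c) c (by omega)
      have h2 : i + (c+1) = (i+c) + 1 := by omega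
      rw [h2]
      exact le_trans h1 (ih (by omega))
  refine ⟨m1, m2, hbase, htop, fun r c h => m5 r c h, zero, diag, bnd, ?_, ?_⟩
  · intro c hc
    have hw := hwt c hc
    unfold wt at hw
    rw [tsum_eq_range' (N := l + L) (fun r hr => by
      unfold rowCount
      rw [zero r (c+1) (by omega), zero r c (by omega)])] at hw
    have := sum_sub_of_le (f := fun r => A r (c+1)) (g := fun r => A r c)
      (n := l + L) (fun r _ => m1 r c hc)
    unfold rowCount at hw
    omega
  · intro j i hj
    have hlt := hlat j i hj
    have h1 := sum_sub_of_le (f := fun r => A r (j+2)) (g := fun r => A r (j+1))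
      (n := i+1) (fun r _ => m1 r (j+1) hj)
    have h2 := sum_sub_of_le (f := fun r => A r (j+1)) (g := fun r => A r j)
      (n := i) (fun r _ => m1 r j (by omega))
    unfold rowCount at hlt
    simp only [show j+1+1 = j+2 by omega] at hlt
    omega

private lemma src_of_good {l L : ℕ} {lam mu nu : ℕ → ℕ} {A : GT}
    (hmu : IsPartition mu)
    (hl0 : ∀ i, l ≤ i → lam i = 0)
    (hg : Good l L lam mu nu A) : MemLR l lam mu nu A := by
  refine ⟨⟨⟨hg.mono, hg.col, ?_, ⟨l, fun i hi => by rw [hg.top]; exact hl0 i hi⟩,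
      fun i j hj => hg.stab i j hj⟩, hg.base, hg.top, ?_⟩, ?_⟩
  · intro i
    rw [hg.base, hg.base]
    exact hmu.1 i
  · intro c hc
    unfold wt
    rw [tsum_eq_range' (N := l + L) (fun r hr => by
      unfold rowCount
      rw [hg.zero r (c+1) (by omega), hg.zero r c (by omega)])]
    have h1 := sum_sub_of_le (f := fun r => A r (c+1)) (g := fun r => A r c)
      (n := l + L) (fun r _ => hg.mono r c hc)
    have h2 := hg.colsum c hc
    unfold rowCount
    omega
  · intro j i hj
    have hlt := hg.latt j i hj
    have h1 := sum_sub_of_le (f := fun r => A r (j+2)) (g := fun r => A r (j+1))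
      (n := i+1) (fun r _ => hg.mono r (j+1) hj)
    have h2 := sum_sub_of_le (f := fun r => A r (j+1)) (g := fun r => A r j)
      (n := i) (fun r _ => hg.mono r j (by omega))
    unfold rowCount
    simp only [show j+1+1 = j+2 by omega]
    omega
section Gmachine

variable {l L : ℕ} {mu nu : ℕ → ℕ} {B : GT}

private lemma G_top_val (q j : ℕ) (hq : q < l) :
    composeGT l (mu 0) (canGT nu) (rotGT l L B) q j = mu 0 + (if q < j then nu q else 0) := by
  simp [composeGT, canGT, hq]

private lemma G_bot_val (hB0l : B 0 l = mu 0) (p j : ℕ) :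
    composeGT l (mu 0) (canGT nu) (rotGT l L B) (l+p) j
      = if p < L then mu 0 - B (L-1-p) (l - min j l) else 0 := by
  have h1 : ¬ (l + p < l) := by omega
  simp only [composeGT, h1, if_false, rotGT, show l + p - l = p by omega, hB0l]

private lemma rcG_top (q c : ℕ) (hq : q < l) :
    rowCount (composeGT l (mu 0) (canGT nu) (rotGT l L B)) q c
      = if q = c then nu c else 0 := by
  unfold rowCount
  rw [G_top_val q (c+1) hq, G_top_val q c hq]
  by_cases hqc : q = c
  · subst hqc
    rw [if_pos (by omega), if_neg (by omega), if_pos rfl]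
    omega
  · rw [if_neg hqc]
    split_ifs <;> omega

private lemma G_sum_top (c n : ℕ) (hn : n ≤ l) :
    (∑ q ∈ Finset.range n, rowCount (composeGT l (mu 0) (canGT nu) (rotGT l L B)) q c)
      = if c < n then nu c else 0 := by
  rw [Finset.sum_congr rfl (fun q hq => rcG_top q c (by
    have := Finset.mem_range.1 hq; omega))]
  rw [Finset.sum_ite_eq' (Finset.range n) c (fun _ => nu c)]
  simp [Finset.mem_range]

private lemma rcG_bot (hB0l : B 0 l = mu 0)
    (hBmu0 : ∀ i j, B i j ≤ mu 0)
    (hBmono : ∀ i j, j < l → B i j ≤ B i (j+1))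
    (p c : ℕ) (hp : p < L) (hc : c < l) :
    rowCount (composeGT l (mu 0) (canGT nu) (rotGT l L B)) (l+p) c
      + B (L-1-p) (l-c-1) = B (L-1-p) (l-c) := by
  unfold rowCount
  rw [G_bot_val hB0l p (c+1), G_bot_val hB0l p c, if_pos hp, if_pos hp]
  rw [show l - min (c+1) l = l - c - 1 by omega, show l - min c l = l - c by omega]
  have h1 : B (L-1-p) (l-c-1) ≤ B (L-1-p) (l-c) := by
    have := hBmono (L-1-p) (l-c-1) (by omega)
    rwa [show l-c-1+1 = l-c by omega] at this
  have h2 := hBmu0 (L-1-p) (l-c)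
  omega

private lemma rcG_bot0 (hB0l : B 0 l = mu 0) (p c : ℕ) (hp : L ≤ p) :
    rowCount (composeGT l (mu 0) (canGT nu) (rotGT l L B)) (l+p) c = 0 := by
  unfold rowCount
  rw [G_bot_val hB0l p (c+1), G_bot_val hB0l p c, if_neg (by omega), if_neg (by omega)]

private lemma G_sum (hB0l : B 0 l = mu 0)
    (hBmu0 : ∀ i j, B i j ≤ mu 0)
    (hBmono : ∀ i j, j < l → B i j ≤ B i (j+1))
    (c P : ℕ) (hc : c < l) :
    (∑ q ∈ Finset.range (l+P), rowCount (composeGT l (mu 0) (canGT nu) (rotGT l L B)) q c)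
      + ∑ i ∈ Finset.Ico (L-P) L, B i (l-c-1)
      = nu c + ∑ i ∈ Finset.Ico (L-P) L, B i (l-c) := by
  set G := composeGT l (mu 0) (canGT nu) (rotGT l L B) with hG
  set M := min P L with hM
  rw [Finset.sum_range_add]
  rw [G_sum_top c l le_rfl, if_pos hc]
  have htrim : (∑ p ∈ Finset.range P, rowCount G (l + p) c)
      = ∑ p ∈ Finset.range M, rowCount G (l + p) c := by
    refine (Finset.sum_subset (Finset.range_subset_range.2 (by omega)) ?_).symm
    intro x hx hnx
    simp only [Finset.mem_range] at hx hnx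
    exact rcG_bot0 hB0l x c (by omega)
  have hsplit : (∑ p ∈ Finset.range M, rowCount G (l + p) c)
      + ∑ p ∈ Finset.range M, B (L-1-p) (l-c-1)
      = ∑ p ∈ Finset.range M, B (L-1-p) (l-c) := by
    rw [← Finset.sum_add_distrib]
    exact Finset.sum_congr rfl (fun p hp =>
      rcG_bot hB0l hBmu0 hBmono p c (by have := Finset.mem_range.1 hp; omega) hc)
  have hrev1 := rev_sum (fun i => B i (l-c-1)) (show M ≤ L by omega)
  have hrev2 := rev_sum (fun i => B i (l-c)) (show M ≤ L by omega)
  rw [show L - M = L - P by omega] at hrev1 hrev2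
  omega

end Gmachine
private lemma tgt_of_good {l L : ℕ} {lam mu nu : ℕ → ℕ} {A B : GT}
    (hlam : IsPartition lam) (hmu : IsPartition mu) (hnu : IsPartition nu)
    (hmuL : ∀ i, L ≤ i → mu i = 0) (hLdef : numRows mu = L)
    (hg : Good l L lam mu nu A)
    (hrel : ∀ i j, j ≤ l → B i j = A (i + (l - j)) (l - j))
    (hBstab : ∀ i j, l ≤ j → B i j = B i l) :
    MemCFstar l mu nu lam B := by
  have hBbase : ∀ i, B i 0 = 0 := fun i => by
    rw [hrel i 0 (by omega)]
    exact hg.zero (i + (l-0)) (l-0) (by omega)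
  have hBtop : ∀ i, B i l = mu i := fun i => by
    rw [hrel i l le_rfl, Nat.sub_self, Nat.add_zero]
    exact hg.base i
  have hBmono : ∀ i j, j < l → B i j ≤ B i (j+1) := by
    intro i j hj
    rw [hrel i j (by omega), hrel i (j+1) hj]
    have h := hg.col (i + (l - (j+1))) (l - (j+1)) (by omega)
    rw [show i + (l-(j+1)) + 1 = i + (l-j) by omega,
      show l - (j+1) + 1 = l - j by omega] at h
    exact h
  have hBcol : ∀ i j, j < l → B (i+1) (j+1) ≤ B i j := by
    intro i j hj
    rw [hrel (i+1) (j+1) hj, hrel i j (by omega)]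
    have h := hg.mono (i + (l - j)) (l - (j+1)) (by omega)
    rw [show l - (j+1) + 1 = l - j by omega] at h
    rw [show i + 1 + (l - (j+1)) = i + (l - j) by omega]
    exact h
  have hBbnd : ∀ i j, B i j ≤ mu i := by
    intro i j
    rcases le_or_gt j l with h | h
    · rw [hrel i j h]
      exact hg.bnd i (l - j) (by omega)
    · rw [hBstab i j (by omega), hBtop i]
  have hBmu0 : ∀ i j, B i j ≤ mu 0 :=
    fun i j => le_trans (hBbnd i j) (partAnti hmu.1 (Nat.zero_le i))
  have hB0l : B 0 l = mu 0 := hBtop 0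
  have hBzero : ∀ i j, L ≤ i → B i j = 0 := fun i j hi => by
    have h1 := hBbnd i j
    have h2 := hmuL i hi
    omega
  have hSBT := hg.SBTa hmuL hrel
  constructor
  · -- B ∈ YT(μ, (λ-ν)*)
    refine ⟨⟨hBmono, hBcol, fun i => by rw [hBbase, hBbase],
      ⟨L, fun i hi => by rw [hBtop]; exact hmuL i hi⟩,
      fun i j hj => hBstab i j hj⟩, hBbase, hBtop, ?_⟩
    intro c hc
    unfold wt wrev
    rw [tsum_eq_range' (N := L) (fun i hi => by
      unfold rowCount
      rw [hBzero i (c+1) hi, hBzero i c hi])]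
    have h1 := sum_sub_of_le (f := fun i => B i (c+1)) (g := fun i => B i c) (n := L)
      (fun i _ => hBmono i c hc)
    have e1 := hSBT (l-c-1) 0 (by omega) (by omega)
    have e2 := hSBT (l-c) 0 (by omega) (by omega)
    rw [Nat.zero_add, ← Finset.range_eq_Ico, show l-(l-c-1) = c+1 by omega,
      hg.SA_diag (le_refl (l-c-1))] at e1
    rw [Nat.zero_add, ← Finset.range_eq_Ico, show l-(l-c) = c by omega,
      hg.SA_diag (le_refl (l-c))] at e2
    have hcs := hg.colsum (l-c-1) (by omega)
    rw [show l-c-1+1 = l-c by omega] at hcs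
    have hLrec := Finset.sum_range_succ lam (l-c-1)
    rw [show l-c-1+1 = l-c by omega] at hLrec
    simp only []
    rw [show l-1-c = l-c-1 by omega]
    unfold rowCount
    omega
  · -- B^• ∘ Can(ν) ∈ LR
    rw [hLdef]
    have hG_wt : ∀ c, c < l →
        wt (composeGT l (mu 0) (canGT nu) (rotGT l L B)) c = lam c := by
      intro c hc
      unfold wt
      rw [tsum_eq_range' (N := l + L) (fun q hq => by
        obtain ⟨p, rfl⟩ : ∃ p, q = l + p := ⟨q - l, by omega⟩
        exact rcG_bot0 (L := L) (nu := nu) hB0l p c (by omega))]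
      have hgs := G_sum (L := L) (nu := nu) hB0l hBmu0 hBmono c L hc
      rw [Nat.sub_self, ← Finset.range_eq_Ico] at hgs
      have e1 := hSBT (c+1) 0 (by omega) (by omega)
      have e2 := hSBT c 0 (by omega) (by omega)
      rw [Nat.zero_add, ← Finset.range_eq_Ico, show l-(c+1) = l-c-1 by omega,
        hg.SA_diag (le_refl (c+1))] at e1
      rw [Nat.zero_add, ← Finset.range_eq_Ico,
        hg.SA_diag (le_refl c)] at e2
      have hcs := hg.colsum c hc
      have hLrec := Finset.sum_range_succ lam c
      omega
    refine ⟨⟨⟨?_, ?_, ?_, ⟨l + L, ?_⟩, ?_⟩, ?_, ?_, hG_wt⟩, ?_⟩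
    · -- row mono
      intro i j hj
      rcases Nat.lt_or_ge i l with hi | hi
      · rw [G_top_val i j hi, G_top_val i (j+1) hi]
        split_ifs <;> omega
      · obtain ⟨p, rfl⟩ : ∃ p, i = l + p := ⟨i - l, by omega⟩
        rw [G_bot_val (L := L) hB0l p j, G_bot_val hB0l p (j+1)]
        by_cases hp : p < L
        · rw [if_pos hp, if_pos hp, show l - min j l = l - j by omega,
            show l - min (j+1) l = l - (j+1) by omega]
          have h := hBmono (L-1-p) (l-(j+1)) (by omega)
          rw [show l-(j+1)+1 = l-j by omega] at h
          have := hBmu0 (L-1-p) (l-j)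
          omega
        · rw [if_neg hp, if_neg hp]
    · -- col strict
      intro i j hj
      rcases Nat.lt_or_ge (i+1) l with hi | hi
      · rw [G_top_val (i+1) (j+1) hi, G_top_val i j (by omega)]
        have := hnu.1 i
        split_ifs <;> omega
      · rcases Nat.lt_or_ge i l with hi2 | hi2
        · rw [show i + 1 = l + 0 by omega, G_bot_val hB0l 0 (j+1), G_top_val i j hi2]
          split_ifs <;> omega
        · obtain ⟨p, rfl⟩ : ∃ p, i = l + p := ⟨i - l, by omega⟩
          rw [show l + p + 1 = l + (p+1) by omega, G_bot_val (L := L) hB0l (p+1) (j+1),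
            G_bot_val (L := L) hB0l p j]
          by_cases hp : p + 1 < L
          · rw [if_pos hp, if_pos (by omega), show l - min (j+1) l = l - (j+1) by omega,
              show l - min j l = l - j by omega]
            have h := hBcol (L-1-(p+1)) (l-(j+1)) (by omega)
            rw [show L-1-(p+1)+1 = L-1-p by omega, show l-(j+1)+1 = l-j by omega] at h
            have := hBmu0 (L-1-p) (l-j)
            omega
          · rw [if_neg hp]
            split_ifs <;> omega
    · -- first column weakly decreasing
      intro i
      rcases Nat.lt_or_ge (i+1) l with hi | hi
      · rw [G_top_val (i+1) 0 hi, G_top_val i 0 (by omega),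
          if_neg (show ¬ (i+1 < 0) by omega), if_neg (show ¬ (i < 0) by omega)]
      · rcases Nat.lt_or_ge i l with hi2 | hi2
        · rw [show i + 1 = l + 0 by omega, G_bot_val hB0l 0 0, G_top_val i 0 hi2]
          split_ifs <;> omega
        · obtain ⟨p, rfl⟩ : ∃ p, i = l + p := ⟨i - l, by omega⟩
          rw [show l + p + 1 = l + (p+1) by omega, G_bot_val (L := L) hB0l (p+1) 0,
            G_bot_val (L := L) hB0l p 0]
          rw [show l - min 0 l = l by omega, hBtop (L-1-(p+1)), hBtop (L-1-p)]
          have h1 : mu (L-1-p) ≤ mu (L-1-(p+1)) := partAnti hmu.1 (by omega)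
          have h2 : mu (L-1-(p+1)) ≤ mu 0 := partAnti hmu.1 (by omega)
          split_ifs <;> omega
    · -- vanishing rows
      intro i hi
      obtain ⟨p, rfl⟩ : ∃ p, i = l + p := ⟨i - l, by omega⟩
      rw [G_bot_val (L := L) hB0l p l, if_neg (by omega)]
    · -- columns beyond l are constant
      intro i j hj
      rcases Nat.lt_or_ge i l with hi | hi
      · rw [G_top_val i j hi, G_top_val i l hi, if_pos (by omega), if_pos (by omega)]
      · obtain ⟨p, rfl⟩ : ∃ p, i = l + p := ⟨i - l, by omega⟩
        rw [G_bot_val (L := L) hB0l p j, G_bot_val (L := L) hB0l p l,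
          show l - min j l = l - min l l by omega]
    · -- inner shape
      intro i
      simp only []
      rcases Nat.lt_or_ge i l with hi | hi
      · rw [G_top_val i 0 hi, if_pos hi, if_neg (show ¬ (i < 0) by omega)]
        omega
      · obtain ⟨p, rfl⟩ : ∃ p, i = l + p := ⟨i - l, by omega⟩
        rw [G_bot_val (L := L) hB0l p 0, if_neg (show ¬ (l + p < l) by omega),
          show l - min 0 l = l by omega, show l + p - l = p by omega]
        by_cases hp : p < L
        · rw [if_pos hp, if_pos hp, hBtop]
        · rw [if_neg hp, if_neg hp]
    · -- outer shape
      intro i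
      simp only []
      rcases Nat.lt_or_ge i l with hi | hi
      · rw [G_top_val i l hi, if_pos hi, if_pos hi]
      · obtain ⟨p, rfl⟩ : ∃ p, i = l + p := ⟨i - l, by omega⟩
        rw [G_bot_val (L := L) hB0l p l, if_neg (show ¬ (l + p < l) by omega),
          show l - min l l = 0 by omega, show l + p - l = p by omega, hBbase]
        by_cases hp : p < L
        · rw [if_pos hp, if_pos hp]
          omega
        · rw [if_neg hp, if_neg hp]
    · -- lattice condition for the composed tableau
      intro j i hj
      rcases Nat.lt_or_ge i l with hi | hi
      · rw [G_sum_top (j+1) (i+1) (by omega), G_sum_top j i (by omega)]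
        have := hnu.1 j
        split_ifs <;> omega
      · obtain ⟨P, rfl⟩ : ∃ P, i = l + P := ⟨i - l, by omega⟩
        rw [show l + P + 1 = l + (P+1) by omega]
        have gl := G_sum (L := L) (nu := nu) hB0l hBmu0 hBmono (j+1) (P+1) hj
        have gr := G_sum (L := L) (nu := nu) hB0l hBmu0 hBmono j P (by omega)
        rw [show l-(j+1)-1 = l-(j+2) by omega] at gl
        rw [show l-j-1 = l-(j+1) by omega] at gr
        by_cases hPL : P < L
        · have s1 := hSBT (j+2) (L-(P+1)) (by omega) (by omega)
          have s2 := hSBT (j+1) (L-(P+1)) (by omega) (by omega)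
          have s3 := hSBT (j+1) (L-P) (by omega) (by omega)
          have s4 := hSBT j (L-P) (by omega) (by omega)
          rw [show L-(P+1)+(j+2) = (L-P+j)+1 by omega] at s1
          rw [show L-(P+1)+(j+1) = L-P+j by omega] at s2
          rw [show L-P+(j+1) = (L-P+j)+1 by omega] at s3
          rw [show L-P+j = L-P+j from rfl] at s4
          have hlt := hg.latt j (L-P+j) hj
          have hc1 := hg.colsum j (by omega)
          have hc2 := hg.colsum (j+1) hj
          rw [show j+1+1 = j+2 by omega] at hc2
          omega
        · rw [show L-(P+1) = 0 by omega] at gl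
          rw [show L-P = 0 by omega] at gr
          have s1 := hSBT (j+2) 0 (by omega) (by omega)
          have s2 := hSBT (j+1) 0 (by omega) (by omega)
          have s4 := hSBT j 0 (by omega) (by omega)
          rw [Nat.zero_add, hg.SA_diag (le_refl (j+2))] at s1
          rw [Nat.zero_add, hg.SA_diag (le_refl (j+1))] at s2
          rw [Nat.zero_add, hg.SA_diag (le_refl j)] at s4
          have hc1 := hg.colsum j (by omega)
          have hc2 := hg.colsum (j+1) hj
          rw [show j+1+1 = j+2 by omega] at hc2
          have hL1 := Finset.sum_range_succ lam (j+1)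
          have hL2 := Finset.sum_range_succ lam j
          rw [show j+1+1 = j+2 by omega] at hL1
          have := hlam.1 j
          omega
/-- The inverse map on GT patterns. -/
private def Aof (l : ℕ) (lam : ℕ → ℕ) (B : GT) : GT := fun r c =>
  if min c l ≤ r then B (r - min c l) (l - min c l) else lam r

private lemma Aof_rel {l : ℕ} {lam : ℕ → ℕ} {B : GT} :
    ∀ i j, j ≤ l → B i j = Aof l lam B (i + (l - j)) (l - j) := by
  intro i j hj
  unfold Aof
  rw [show min (l-j) l = l - j by omega, if_pos (by omega)]
  congr 1 <;> omega

private lemma Aof_gamma {l L : ℕ} {lam mu nu : ℕ → ℕ} {A : GT}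
    (hg : Good l L lam mu nu A) : Aof l lam (gammaMap l A) = A := by
  have hgc := gamma_closed hg.mono hg.col (fun i => hg.zero (l+i) l (by omega))
  funext r c
  unfold Aof
  by_cases h : min c l ≤ r
  · rw [if_pos h, hgc]
    rcases le_or_gt c l with hcl | hcl
    · rw [show min c l = c by omega] at h ⊢
      rw [show l - (l - c) = c by omega, show r - c + c = r by omega]
    · rw [show min c l = l by omega] at h ⊢
      rw [Nat.sub_self, Nat.sub_zero, show r - l + l = r by omega]
      exact (hg.stab r c (by omega)).symm
  · rw [if_neg h]
    have h2 : r < c ∧ r < l := by omega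
    exact (hg.diag r c h2.1).symm

private lemma good_of_tgt {l L : ℕ} {lam mu nu : ℕ → ℕ} {B : GT}
    (hlam : IsPartition lam) (hmu : IsPartition mu) (hnu : IsPartition nu)
    (hl : ∀ i, lam i = 0 ↔ l ≤ i)
    (hsize : psize mu + psize nu = psize lam)
    (hmuL : ∀ i, L ≤ i → mu i = 0) (hLdef : numRows mu = L)
    (hB : MemCFstar l mu nu lam B) :
    Good l L lam mu nu (Aof l lam B) := by
  obtain ⟨⟨⟨b1, b2, b3, b4, b5⟩, hB0x, hBl, hwtB⟩, hGLR⟩ := hB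
  have hB0 : ∀ i, B i 0 = 0 := fun i => hB0x i
  have hGlat := hGLR.2
  rw [hLdef] at hGlat
  -- facts about B
  have hBbnd : ∀ i j, B i j ≤ mu i := by
    intro i j
    rcases le_or_gt j l with h | h
    · have := monoLe b1 i j l h le_rfl
      rw [hBl i] at this
      exact this
    · rw [b5 i j (by omega), hBl i]
  have hBmu0 : ∀ i j, B i j ≤ mu 0 :=
    fun i j => le_trans (hBbnd i j) (partAnti hmu.1 (Nat.zero_le i))
  have hB0l : B 0 l = mu 0 := hBl 0
  have hBzero : ∀ i j, L ≤ i → B i j = 0 := fun i j hi => by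
    have h1 := hBbnd i j
    have h2 := hmuL i hi
    omega
  have hBlowle : ∀ j, j ≤ l → ∀ i, j ≤ i → B i j = 0 := by
    intro j
    induction j with
    | zero => intro _ i _; exact hB0 i
    | succ j ih =>
      intro hj i hi
      have h1 := b2 (i-1) j (by omega)
      rw [show i - 1 + 1 = i by omega] at h1
      have h2 := ih (by omega) (i-1) (by omega)
      omega
  have hBlow : ∀ i j, j ≤ i → B i j = 0 := by
    intro i j hij
    rcases le_or_gt j l with h | h
    · exact hBlowle j h i hij
    · rw [b5 i j (by omega)]
      exact hBlowle l le_rfl i (by omega)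
  -- value lemmas for A := Aof l lam B
  set A := Aof l lam B with hAdef
  have hAB : ∀ r c, c ≤ l → c ≤ r → A r c = B (r-c) (l-c) := by
    intro r c h1 h2
    show (if min c l ≤ r then B (r - min c l) (l - min c l) else lam r) = _
    rw [show min c l = c by omega, if_pos h2]
  have hAlam : ∀ r c, c ≤ l → r < c → A r c = lam r := by
    intro r c h1 h2
    show (if min c l ≤ r then B (r - min c l) (l - min c l) else lam r) = _
    rw [show min c l = c by omega, if_neg (by omega)]
  have hAbig : ∀ r c, l ≤ c → A r c = (if l ≤ r then B (r-l) 0 else lam r) := by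
    intro r c h1
    show (if min c l ≤ r then B (r - min c l) (l - min c l) else lam r) = _
    rw [show min c l = l by omega, Nat.sub_self]
  -- Good fields that are easy
  have base : ∀ r, A r 0 = mu r := by
    intro r
    rw [hAB r 0 (by omega) (by omega), Nat.sub_zero, Nat.sub_zero, hBl]
  have top : ∀ r, A r l = lam r := by
    intro r
    rcases le_or_gt l r with h | h
    · rw [hAB r l le_rfl h, Nat.sub_self, hB0]
      have := (hl r).mpr h
      omega
    · exact hAlam r l le_rfl h
  have stab : ∀ r c, l ≤ c → A r c = A r l := by
    intro r c hc
    rw [hAbig r c hc, hAbig r l le_rfl]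
  have zero : ∀ r c, l ≤ r → A r c = 0 := by
    intro r c hr
    rcases le_or_gt c l with h | h
    · rw [hAB r c h (by omega)]
      exact hBlow (r-c) (l-c) (by omega)
    · rw [hAbig r c (by omega), if_pos hr]
      exact hB0 (r-l)
  have diag : ∀ r c, r < c → A r c = lam r := by
    intro r c hrc
    rcases le_or_gt c l with h | h
    · exact hAlam r c h hrc
    · rw [hAbig r c (by omega)]
      rcases le_or_gt l r with h2 | h2
      · rw [if_pos h2, hB0]
        have := (hl r).mpr h2
        omega
      · rw [if_neg (by omega)]
  have col : ∀ r c, c < l → A (r+1) (c+1) ≤ A r c := by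
    intro r c hc
    rcases le_or_gt c r with h | h
    · rw [hAB (r+1) (c+1) (by omega) (by omega), hAB r c (by omega) h]
      have h1 := b1 (r-c) (l-(c+1)) (by omega)
      rw [show l-(c+1)+1 = l-c by omega] at h1
      rw [show r+1-(c+1) = r-c by omega]
      exact h1
    · rw [hAlam (r+1) (c+1) (by omega) (by omega), hAlam r c (by omega) h]
      exact hlam.1 r
  have bnd : ∀ i c, c ≤ l → A (i+c) c ≤ mu i := by
    intro i c hc
    rw [hAB (i+c) c hc (by omega), show i+c-c = i by omega]
    exact hBbnd i (l-c)
  have hvan : ∀ r c, c ≤ l → L + c ≤ r → A r c = 0 := by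
    intro r c h1 h2
    rw [hAB r c h1 (by omega)]
    exact hBzero (r-c) (l-c) (by omega)
  have hrel : ∀ i j, j ≤ l → B i j = A (i + (l - j)) (l - j) := fun i j hj => Aof_rel i j hj
  have hSBT := SBTa' (L := L) hvan hrel
  -- weights of B as finite sums
  have hwt' : ∀ c, c < l → (∑ i ∈ Finset.range L, rowCount B i c) = lam (l-1-c) - nu (l-1-c) := by
    intro c hc
    have h := hwtB c hc
    unfold wt wrev at h
    rw [tsum_eq_range' (N := L) (fun i hi => by
      unfold rowCount
      rw [hBzero i (c+1) hi, hBzero i c hi])] at h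
    exact h
  have hadd : ∀ c, c < l → (∑ i ∈ Finset.range L, rowCount B i c) + ∑ i ∈ Finset.range L, B i c
      = ∑ i ∈ Finset.range L, B i (c+1) := by
    intro c hc
    have := sum_sub_of_le (f := fun i => B i (c+1)) (g := fun i => B i c) (n := L)
      (fun i _ => b1 i c hc)
    unfold rowCount
    exact this
  -- the size argument: nu ≤ lam on [0, l)
  have hE4 : ∀ c, c < l → nu c ≤ lam c := by
    have htel : ∀ n, n ≤ l → (∑ c ∈ Finset.range n, (lam (l-1-c) - nu (l-1-c)))
        = ∑ i ∈ Finset.range L, B i n := by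
      intro n
      induction n with
      | zero =>
        intro _
        rw [Finset.sum_range_zero]
        exact (Finset.sum_eq_zero (fun i _ => hB0 i)).symm
      | succ n ih =>
        intro hn
        rw [Finset.sum_range_succ, ih (by omega)]
        have h1 := hadd n (by omega)
        have h2 := hwt' n (by omega)
        omega
    have hSl : (∑ c ∈ Finset.range l, (lam (l-1-c) - nu (l-1-c))) = ∑ i ∈ Finset.range L, mu i := by
      rw [htel l le_rfl]
      exact Finset.sum_congr rfl (fun i _ => hBl i)
    have hrefl := Finset.sum_range_reflect (fun c => lam c - nu c) l
    have hpsmu : psize mu = ∑ i ∈ Finset.range L, mu i := tsum_eq_range' hmuL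
    have hpslam : psize lam = ∑ c ∈ Finset.range l, lam c :=
      tsum_eq_range' (fun i hi => (hl i).mpr hi)
    obtain ⟨N, hN⟩ := hnu.2
    have hsumm : Summable nu := summable_of_ne_finset_zero (s := Finset.range N)
      (fun i hi => hN i (by simpa using hi))
    have hnusum : (∑ c ∈ Finset.range l, nu c) ≤ psize nu :=
      Summable.sum_le_tsum (Finset.range l) (fun _ _ => Nat.zero_le _) hsumm
    have hptwise : ∀ c ∈ Finset.range l, lam c ≤ (lam c - nu c) + nu c :=
      fun c _ => by omega
    have hsplit : (∑ c ∈ Finset.range l, ((lam c - nu c) + nu c))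
        = (∑ c ∈ Finset.range l, (lam c - nu c)) + ∑ c ∈ Finset.range l, nu c :=
      Finset.sum_add_distrib
    have hkey : (∑ c ∈ Finset.range l, lam c) = ∑ c ∈ Finset.range l, ((lam c - nu c) + nu c) := by
      have hle := Finset.sum_le_sum hptwise
      have : (∑ c ∈ Finset.range l, (lam c - nu c)) = psize mu := by
        rw [hpsmu, ← hSl, ← hrefl]
      omega
    have := (Finset.sum_eq_sum_iff_of_le hptwise).1 hkey
    intro c hc
    have h := this c (Finset.mem_range.2 hc)
    omega
  -- column sums of A
  have colsum : ∀ c, c < l →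
      (∑ r ∈ Finset.range (l+L), A r (c+1)) = (∑ r ∈ Finset.range (l+L), A r c) + nu c := by
    intro c hc
    have e1 := hSBT (c+1) 0 (by omega) (by omega)
    have e2 := hSBT c 0 (by omega) (by omega)
    rw [Nat.zero_add, ← Finset.range_eq_Ico, show l-(c+1) = l-c-1 by omega,
      SA_diag' diag (le_refl (c+1))] at e1
    rw [Nat.zero_add, ← Finset.range_eq_Ico, SA_diag' diag (le_refl c)] at e2
    have hLrec := Finset.sum_range_succ lam c
    have hw := hwt' (l-c-1) (by omega)
    rw [show l-1-(l-c-1) = c by omega] at hw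
    have ha := hadd (l-c-1) (by omega)
    rw [show l-c-1+1 = l-c by omega] at ha
    have hE := hE4 c hc
    omega
  -- the lattice property of A
  have latt : ∀ j i, j+1 < l →
      (∑ r ∈ Finset.range (i+1), A r (j+2)) + (∑ r ∈ Finset.range i, A r j)
        ≤ (∑ r ∈ Finset.range (i+1), A r (j+1)) + (∑ r ∈ Finset.range i, A r (j+1)) := by
    intro j i hj
    rcases le_or_gt i j with hij | hij
    · rw [SA_diag' diag (show i+1 ≤ j+2 by omega), SA_diag' diag (show i ≤ j by omega),
        SA_diag' diag (show i+1 ≤ j+1 by omega), SA_diag' diag (show i ≤ j+1 by omega)]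
    · rcases le_or_gt i (j + L) with hiL | hiL
      · -- the window: use the lattice of the composed tableau
        set P := L - (i - j) with hP
        have hglat := hGlat j (l + P) hj
        rw [show l+P+1 = l+(P+1) by omega] at hglat
        have gl := G_sum (L := L) (nu := nu) hB0l hBmu0 b1 (j+1) (P+1) hj
        have gr := G_sum (L := L) (nu := nu) hB0l hBmu0 b1 j P (by omega)
        rw [show l-(j+1)-1 = l-(j+2) by omega] at gl
        rw [show l-j-1 = l-(j+1) by omega] at gr
        have s1 := hSBT (j+2) (L-(P+1)) (by omega) (by omega)
        have s2 := hSBT (j+1) (L-(P+1)) (by omega) (by omega)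
        have s3 := hSBT (j+1) (L-P) (by omega) (by omega)
        have s4 := hSBT j (L-P) (by omega) (by omega)
        rw [show L-(P+1)+(j+2) = i+1 by omega] at s1
        rw [show L-(P+1)+(j+1) = i by omega] at s2
        rw [show L-P+(j+1) = i+1 by omega] at s3
        rw [show L-P+j = i by omega] at s4
        have hc1 := colsum j (by omega)
        have hc2 := colsum (j+1) hj
        rw [show j+1+1 = j+2 by omega] at hc2
        omega
      · -- deep rows: stabilized sums
        have t1 := SA_stab' (l := l) (L := L) hvan (show j+2 ≤ l by omega) (show L+(j+2) ≤ i+1 by omega)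
        have t2 := SA_stab' (l := l) (L := L) hvan (show j ≤ l by omega) (show L+j ≤ i by omega)
        have t3 := SA_stab' (l := l) (L := L) hvan (show j+1 ≤ l by omega) (show L+(j+1) ≤ i+1 by omega)
        have t4 := SA_stab' (l := l) (L := L) hvan (show j+1 ≤ l by omega) (show L+(j+1) ≤ i by omega)
        have hc1 := colsum j (by omega)
        have hc2 := colsum (j+1) hj
        rw [show j+1+1 = j+2 by omega] at hc2
        have := hnu.1 j
        omega
  -- the diagonal bound, by downward induction
  have hdb : ∀ c, A c c ≤ lam c := by
    have key : ∀ d c, l - c ≤ d → A c c ≤ lam c := by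
      intro d
      induction d with
      | zero =>
        intro c hc
        rw [zero c c (by omega)]
        exact Nat.zero_le _
      | succ d ih =>
        intro c hc
        rcases le_or_gt l c with h | h
        · rw [zero c c h]; exact Nat.zero_le _
        rcases Nat.eq_or_lt_of_le (show c + 1 ≤ l by omega) with h1 | h1
        · -- c = l - 1
          rw [hAB c c (by omega) le_rfl]
          rcases Nat.eq_zero_or_pos L with hL | hL
          · rw [hBzero (c-c) (l-c) (by omega)]
            exact Nat.zero_le _
          · have hone : B 0 (l-c) ≤ ∑ i ∈ Finset.range L, B i (l-c) :=
              Finset.single_le_sum (f := fun i => B i (l-c)) (fun i _ => Nat.zero_le _)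
                (Finset.mem_range.2 hL)
            have hw := hwt' (l-c-1) (by omega)
            rw [show l-1-(l-c-1) = c by omega] at hw
            have ha := hadd (l-c-1) (by omega)
            rw [show l-c-1+1 = l-c by omega] at ha
            have hz : (∑ i ∈ Finset.range L, B i (l-c-1)) = 0 :=
              Finset.sum_eq_zero (fun i _ => by
                rw [show l-c-1 = 0 by omega]; exact hB0 i)
            rw [show c - c = 0 from by omega]
            omega
        · -- c < l - 1 : use the lattice at (c, c+1)
          have hlt := latt c (c+1) (by omega)
          have e1 := SA_diag' (lam := lam) diag (show c+1+1 ≤ c+2 by omega)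
          have e2 := Finset.sum_range_succ (fun r => A r c) c
          have e2' := SA_diag' (lam := lam) diag (le_refl c)
          have e3 := Finset.sum_range_succ (fun r => A r (c+1)) (c+1)
          have e3' := SA_diag' (lam := lam) diag (le_refl (c+1))
          have hih := ih (c+1) (by omega)
          have hL1 := Finset.sum_range_succ lam (c+1)
          have hL2 := Finset.sum_range_succ lam c
          omega
    exact fun c => key (l - c) c le_rfl
  have mono : ∀ r c, c < l → A r c ≤ A r (c+1) := by
    intro r c hc
    rcases Nat.lt_trichotomy r c with h | h | h
    · rw [hAlam r c (by omega) h, hAlam r (c+1) (by omega) (by omega)]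
    · subst h
      rw [hAlam r (r+1) (by omega) (by omega)]
      exact hdb r
    · rw [hAB r c (by omega) (by omega), hAB r (c+1) (by omega) (by omega)]
      have h1 := b2 (r-(c+1)) (l-(c+1)) (by omega)
      rw [show r-(c+1)+1 = r-c by omega, show l-(c+1)+1 = l-c by omega] at h1
      exact h1
  exact ⟨mono, col, base, top, stab, zero, diag, bnd, colsum, latt⟩
/-- Proposition 10.
Let `μ ⊆ λ` and `ν ⊢ |λ/μ|`, with `l = ℓ(λ)`.  The map `γ`, defined on recording
matrices by `d_{i,j} = Σ_{q=0}^{l-j} c_{l-j+i,q} - Σ_{q=0}^{l-j+1} c_{l-j+1+i,q}`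
(with `c_{0,0} = 0`, `c_{i,0} = μ_i` for `1 ≤ i ≤ l`, `c_{k,j} = 0` for `k > l`),
is a well-defined bijection `γ : LR(λ/μ, ν) → CF*(μ, ν, λ)`. -/
theorem gamma_bijection
    (l : ℕ) (lam mu nu : ℕ → ℕ)
    (hlam : IsPartition lam) (hmu : IsPartition mu) (hnu : IsPartition nu)
    (hsub : subShape mu lam)
    (hsize : psize mu + psize nu = psize lam)
    (hl : ∀ i, lam i = 0 ↔ l ≤ i) :
    Set.BijOn (gammaMap l) {A | MemLR l lam mu nu A}
      {B | MemCFstar l mu nu lam B} := by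
  have hmuL : ∀ i, numRows mu ≤ i → mu i = 0 := by
    have hne : {N | ∀ i, N ≤ i → mu i = 0}.Nonempty := hmu.2
    exact Nat.sInf_mem hne
  have hl0 : ∀ i, l ≤ i → lam i = 0 := fun i hi => (hl i).mpr hi
  refine ⟨?_, ?_, ?_⟩
  · -- MapsTo
    intro A hA
    have hg := good_of_src (L := numRows mu) hsub hl0 hA
    have hgc := gamma_closed hg.mono hg.col (fun i => hg.zero (l+i) l (by omega))
    exact tgt_of_good hlam hmu hnu hmuL rfl hg (fun i j _ => hgc i j)
      (fun i j hj => by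
        rw [hgc i j, hgc i l, show l - j = 0 by omega, show l - l = 0 by omega])
  · -- InjOn
    intro A1 h1 A2 h2 heq
    have hg1 := good_of_src (L := numRows mu) hsub hl0 h1
    have hg2 := good_of_src (L := numRows mu) hsub hl0 h2
    rw [← Aof_gamma hg1, ← Aof_gamma hg2, heq]
  · -- SurjOn
    intro B hB
    have hgd := good_of_tgt hlam hmu hnu hl hsize hmuL rfl hB
    refine ⟨Aof l lam B, src_of_good hmu hl0 hgd, ?_⟩
    have hgc := gamma_closed hgd.mono hgd.col (fun p => hgd.zero (l+p) l (by omega))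
    funext i j
    rw [hgc i j]
    rcases le_or_gt j l with hj | hj
    · exact (Aof_rel i j hj).symm
    · rw [show l - j = 0 by omega, Nat.add_zero]
      show (if min 0 l ≤ i then B (i - min 0 l) (l - min 0 l) else lam i) = B i j
      rw [show min 0 l = 0 by omega, if_pos (Nat.zero_le i), Nat.sub_zero, Nat.sub_zero]
      exact (hB.1.1.2.2.2.2 i j (le_of_lt hj)).symm

end YoungTableauBijections
end
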